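/- arXiv:2202.04366 — 5 statements merged into one kernel-verified Lean document; each statement's English description precedes it below -/
import Mathlib

section
/- Let n ∈ ℕ, N = 2^n, and let G be the n-fold Kronecker power over 𝔽₂ of the kernel [[1,0],[1,1]]. For every nonempty set T ⊆ {0,…,N−1} of row indices, the Hamming weight of the 𝔽₂-sum g_T = Σ_{t∈T} g_t of the corresponding rows satisfies, as an identity of integers, i₁(g_T) = Σ_{w=1}^{|T|} (−2)^{w−1} · Σ_{S ⊆ T, |S| = w} 2^{popcount(⋀_{j∈S} j)}, where ⋀_{j∈S} j is the bitwise AND of the elements of S and popcount counts the ones in the binary representation. -/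
/-!
Entry `(t, c)` of the Kronecker power is `1` exactly when `c` is a bitwise submask of `t`, so
coordinate `c` of `g_T` is the parity of `m_c = #{t ∈ T | c ⊆ t}`. By the binomial theorem,
`[m odd] = (1 - (1 - 2) ^ m) / 2 = ∑_{w ≥ 1} (-2) ^ (w - 1) * choose m w`, and summing
`choose m_c w` over `c` counts the pairs `(c, S)` with `S ⊆ T`, `#S = w` and `c` a submask of
`⋀ S`; a number with `k` one-bits has `2 ^ k` submasks.
-/

open Finset

/-- The polar kernel `G₂ = [[1,0],[1,1]]` over `𝔽₂`. -/
def polarKernel : Matrix (Fin 2) (Fin 2) (ZMod 2) := !![1, 0; 1, 1]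

/-- The `n`-fold Kronecker power of the polar kernel, an `N × N` matrix over `𝔽₂`
with `N = 2 ^ n`, rows and columns indexed by `0, …, N-1`. -/
def polarG : (n : ℕ) → Matrix (Fin (2 ^ n)) (Fin (2 ^ n)) (ZMod 2)
  | 0 => 1
  | n + 1 =>
    Matrix.reindex (finCongr (by ring)) (finCongr (by ring))
      (Matrix.reindex finProdFinEquiv finProdFinEquiv
        (Matrix.kroneckerMap (· * ·) polarKernel (polarG n)))

/-- Row `g_t` of the polar matrix, as a vector in `𝔽₂^N`. -/
def row (n : ℕ) (t : Fin (2 ^ n)) : Fin (2 ^ n) → ZMod 2 := fun c => polarG n t c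

/-- Hamming weight `i₁(v)`: the number of nonzero coordinates of `v`. -/
def hammingWeight {N : ℕ} (v : Fin N → ZMod 2) : ℕ :=
  (Finset.univ.filter fun c => v c ≠ 0).card

/-- `popcount j`: the number of ones in the binary representation of `j`. -/
def popcount (j : ℕ) : ℕ := (Nat.bits j).count true

instance : Std.Commutative fun (a b : ℕ) => a &&& b := ⟨Nat.land_comm⟩
instance : Std.Associative fun (a b : ℕ) => a &&& b := ⟨Nat.land_assoc⟩

lemma land_eq_left_iff {c m : ℕ} : c &&& m = c ↔ ∀ i, c.testBit i → m.testBit i := by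
  refine ⟨fun h i hi => ?_, fun h => Nat.eq_of_testBit_eq fun i => ?_⟩
  · rw [← h, Nat.testBit_land, Bool.and_eq_true] at hi
    exact hi.2
  · rw [Nat.testBit_land]
    cases hci : c.testBit i
    · rfl
    · simp [h i hci]

lemma land_eq_left_iff_subset {c m : ℕ} :
    c &&& m = c ↔ c.bitIndices.toFinset ⊆ m.bitIndices.toFinset := by
  simp [land_eq_left_iff, Finset.subset_iff]

lemma land_land_eq_left_iff {c a b : ℕ} :
    c &&& (a &&& b) = c ↔ c &&& a = c ∧ c &&& b = c := by
  simp only [land_eq_left_iff, Nat.testBit_land, Bool.and_eq_true, imp_and, forall_and]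

lemma land_eq_left_iff_div_mod_two_pow (n : ℕ) {c m : ℕ} :
    c &&& m = c ↔
      c / 2 ^ n &&& m / 2 ^ n = c / 2 ^ n ∧ c % 2 ^ n &&& m % 2 ^ n = c % 2 ^ n := by
  simp only [land_eq_left_iff, Nat.testBit_div_two_pow, Nat.testBit_mod_two_pow,
    Bool.and_eq_true, decide_eq_true_eq]
  refine ⟨fun h => ⟨fun i => h _, fun i hi => ⟨hi.1, h i hi.2⟩⟩, fun ⟨hhigh, hlow⟩ i hi => ?_⟩
  rcases lt_or_ge i n with hin | hin
  · exact (hlow i ⟨hin, hi⟩).2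
  · simpa [Nat.sub_add_cancel hin, hi] using hhigh (i - n)

lemma land_fold_eq_left_iff {α : Type*} {c : ℕ} (b : ℕ) (f : α → ℕ) (S : Finset α) :
    c &&& S.fold (fun x y : ℕ => x &&& y) b f = c ↔ c &&& b = c ∧ ∀ t ∈ S, c &&& f t = c := by
  classical
  induction S using Finset.induction_on with
  | empty => simp
  | insert a S ha ih =>
    rw [Finset.fold_insert ha, land_land_eq_left_iff, ih, Finset.forall_mem_insert]
    tauto

lemma popcount_eq_length_bitIndices (m : ℕ) : popcount m = m.bitIndices.length := by
  induction m using Nat.evenOddRec with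
  | h0 => simp [popcount]
  | h_even m ih =>
    rcases eq_or_ne m 0 with rfl | hm
    · simp [popcount]
    · simp [popcount, Nat.bit0_bits m hm, ← ih]
  | h_odd m ih => simp [popcount, Nat.bit1_bits, ← ih]

/-- Bit sets identify the submasks of `m` with the subsets of its `popcount m` one-bits. -/
lemma card_filter_land_eq_left {n m : ℕ} (hm : m < 2 ^ n) :
    #{c : Fin (2 ^ n) | (c : ℕ) &&& m = c} = 2 ^ popcount m := by
  rw [popcount_eq_length_bitIndices, ← List.toFinset_card_of_nodup Nat.bitIndices_nodup,
    ← Finset.card_powerset]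
  refine Finset.card_bij (fun c _ => (c : ℕ).bitIndices.toFinset) ?_ ?_ ?_
  · intro c hc
    simpa [land_eq_left_iff_subset] using hc
  · intro c _ d _ hcd
    exact Fin.ext (Finset.equivBitIndices.injective hcd)
  · intro s hs
    set c := ∑ i ∈ s, 2 ^ i
    have hbits : c.bitIndices.toFinset = s := Finset.toFinset_bitIndices_sum_two_pow s
    have hsub : c &&& m = c := by
      rw [land_eq_left_iff_subset, hbits]
      exact Finset.mem_powerset.1 hs
    have hlt : c < 2 ^ n := (hsub ▸ Nat.and_le_right).trans_lt hm
    exact ⟨⟨c, hlt⟩, by simpa using hsub, hbits⟩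

lemma polarKernel_apply (a b : Fin 2) :
    polarKernel a b = if (b : ℕ) &&& a = b then 1 else 0 := by
  fin_cases a <;> fin_cases b <;> rfl

lemma polarG_apply (n : ℕ) (t c : Fin (2 ^ n)) :
    polarG n t c = if (c : ℕ) &&& t = c then 1 else 0 := by
  induction n with
  | zero =>
    obtain rfl : t = c := Fin.ext (by omega)
    simp [polarG]
  | succ n ih =>
    simp only [polarG, Matrix.reindex_apply, Matrix.submatrix_apply, Matrix.kroneckerMap_apply,
      polarKernel_apply, ih, ite_zero_mul_ite_zero, mul_one]
    simp only [finCongr_symm, finCongr_apply, finProdFinEquiv_symm_apply, Fin.coe_divNat,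
      Fin.coe_modNat, Fin.val_cast]
    exact if_congr (land_eq_left_iff_div_mod_two_pow n).symm rfl rfl

lemma sum_row_apply (n : ℕ) (T : Finset (Fin (2 ^ n))) (c : Fin (2 ^ n)) :
    (∑ t ∈ T, row n t) c =
      (#(T.filter fun t : Fin (2 ^ n) => (c : ℕ) &&& (t : ℕ) = c) : ZMod 2) := by
  simp [row, polarG_apply, Finset.sum_boole]

lemma hammingWeight_natCast {N : ℕ} (m : Fin N → ℕ) :
    hammingWeight (fun c => (m c : ZMod 2)) = #{c | Odd (m c)} := by
  simp [hammingWeight, ZMod.natCast_eq_zero_iff_even]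

/-- Evaluating `(1 - 2) ^ m` by the binomial theorem. -/
lemma ite_odd_eq_sum_Icc_neg_two_pow_mul_choose {m M : ℕ} (h : m ≤ M) :
    (if Odd m then 1 else 0 : ℤ) = ∑ w ∈ Icc 1 M, (-2) ^ (w - 1) * (m.choose w : ℤ) := by
  have hbinom : ∑ w ∈ range (M + 1), (-2 : ℤ) ^ w * (m.choose w : ℤ) = (-1) ^ m := by
    rw [← Finset.sum_subset (Finset.range_subset_range.2 (by omega : m + 1 ≤ M + 1))]
    · simpa [add_comm] using (add_pow (-2 : ℤ) 1 m).symm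
    · intro w _ hw
      simp [Nat.choose_eq_zero_of_lt (by simpa using hw : m < w)]
  have hshift : ∑ w ∈ range (M + 1), (-2 : ℤ) ^ w * (m.choose w : ℤ) =
      1 - 2 * ∑ w ∈ Icc 1 M, (-2) ^ (w - 1) * (m.choose w : ℤ) := by
    rw [range_eq_Ico, sum_eq_sum_Ico_succ_bot (by omega), zero_add,
      Finset.Ico_add_one_right_eq_Icc, Finset.mul_sum, sub_eq_add_neg, ← Finset.sum_neg_distrib]
    refine congrArg₂ (· + ·) (by simp) (Finset.sum_congr rfl fun w hw => ?_)
    obtain ⟨k, rfl⟩ : ∃ k, w = k + 1 := ⟨w - 1, by grind⟩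
    simp only [Nat.add_sub_cancel, pow_succ]
    ring
  rcases Nat.even_or_odd m with hm | hm
  · rw [hshift, hm.neg_one_pow] at hbinom
    simp [Nat.not_odd_iff_even.2 hm]
    linarith
  · rw [hshift, hm.neg_one_pow] at hbinom
    simp [hm]
    linarith

lemma sum_choose_card_filter {ι α : Type*} [Fintype ι] (P : ι → α → Prop)
    [∀ i, DecidablePred (P i)] (T : Finset α) (w : ℕ) :
    ∑ i, (#{t ∈ T | P i t}).choose w = ∑ S ∈ T.powersetCard w, #{i | ∀ t ∈ S, P i t} := by
  have hfilter : ∀ i, (T.filter (P i)).powersetCard w =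
      (T.powersetCard w).filter fun S => ∀ t ∈ S, P i t := by
    intro i
    ext S
    simp only [Finset.mem_powersetCard, Finset.mem_filter, Finset.subset_iff, imp_and, forall_and]
    tauto
  simp only [← Finset.card_powersetCard, hfilter]
  simp only [Finset.card_filter]
  exact Finset.sum_comm

lemma card_filter_forall_land_eq_left (n : ℕ) (S : Finset (Fin (2 ^ n))) :
    #{c : Fin (2 ^ n) | ∀ t ∈ S, (c : ℕ) &&& (t : ℕ) = c} =
      2 ^ popcount (S.fold (· &&& ·) (2 ^ n - 1) (fun j : Fin (2 ^ n) => (j : ℕ))) := by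
  set A : ℕ := S.fold (fun x y : ℕ => x &&& y) (2 ^ n - 1) (fun j : Fin (2 ^ n) => (j : ℕ))
  have hsub : ∀ c : ℕ, c < 2 ^ n → (c &&& A = c ↔ ∀ t ∈ S, c &&& t = c) := fun c hc => by
    rw [land_fold_eq_left_iff, Nat.and_two_pow_sub_one_eq_mod, Nat.mod_eq_of_lt hc,
      and_iff_right rfl]
  have hA : A < 2 ^ n := by
    have : A &&& (2 ^ n - 1) = A := ((land_fold_eq_left_iff _ _ S).1 (Nat.and_self A)).1
    exact (this ▸ Nat.and_le_right).trans_lt (Nat.sub_lt (Nat.two_pow_pos n) one_pos)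
  rw [← card_filter_land_eq_left hA]
  exact congrArg card (Finset.filter_congr fun c _ => (hsub c c.isLt).symm)

theorem hamming_weight_of_row_sum_general (n : ℕ) (T : Finset (Fin (2 ^ n))) :
    (hammingWeight (∑ t ∈ T, row n t) : ℤ) =
      ∑ w ∈ Finset.Icc 1 T.card, (-2 : ℤ) ^ (w - 1) *
        ∑ S ∈ Finset.powersetCard w T,
          2 ^ popcount (Finset.fold (· &&& ·) (2 ^ n - 1) (fun j : Fin (2 ^ n) => (j : ℕ)) S) := by
  set m : Fin (2 ^ n) → ℕ := fun c => #(T.filter fun t : Fin (2 ^ n) => (c : ℕ) &&& (t : ℕ) = c)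
  have hweight : hammingWeight (∑ t ∈ T, row n t) = #{c | Odd (m c)} := by
    rw [← hammingWeight_natCast, funext (sum_row_apply n T)]
  have hcount (w : ℕ) : ∑ c, ((m c).choose w : ℤ) = ∑ S ∈ T.powersetCard w,
      2 ^ popcount (S.fold (· &&& ·) (2 ^ n - 1) (fun j : Fin (2 ^ n) => (j : ℕ))) := by
    -- `convert` reconciles the two `Decidable` instances of `∀ t ∈ S, _`, which are not defeq
    exact_mod_cast (sum_choose_card_filter _ T w).trans
      (Finset.sum_congr rfl fun S _ => by convert card_filter_forall_land_eq_left n S)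
  calc (hammingWeight (∑ t ∈ T, row n t) : ℤ)
      = ∑ c, (if Odd (m c) then 1 else 0 : ℤ) := by rw [hweight, card_filter]; push_cast; rfl
    _ = ∑ c, ∑ w ∈ Icc 1 #T, (-2) ^ (w - 1) * ((m c).choose w : ℤ) :=
      Finset.sum_congr rfl fun c _ => ite_odd_eq_sum_Icc_neg_two_pow_mul_choose (card_filter_le _ _)
    _ = _ := by
      simp only [Finset.sum_comm (s := univ), ← Finset.mul_sum, hcount]

/-- exact formula for the Hamming weight of a sum of rows of the
polar matrix, as an identity of integers. -/
theorem hamming_weight_of_row_sum (n : ℕ) (T : Finset (Fin (2 ^ n))) (hT : T.Nonempty) :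
    (hammingWeight (∑ t ∈ T, row n t) : ℤ) =
      ∑ w ∈ Finset.Icc 1 T.card, (-2 : ℤ) ^ (w - 1) *
        ∑ S ∈ Finset.powersetCard w T,
          2 ^ popcount (Finset.fold (· &&& ·) (2 ^ n - 1) (fun j : Fin (2 ^ n) => (j : ℕ)) S) :=
  hamming_weight_of_row_sum_general n T
end

section
/- Let n ∈ ℕ, N = 2^n, and let G be the n-fold Kronecker power over 𝔽₂ of the kernel [[1,0],[1,1]]. Let π : {0,…,n−1} → {0,…,n−1} be a bijection (a permutation of bit positions) and define σ : {0,…,N−1} → {0,…,N−1} by: the ℓ-th binary digit of σ(j) equals the π(ℓ)-th binary digit of j, for all ℓ < n. Then for every T ⊆ {0,…,N−1}, the Hamming weight of the 𝔽₂-sum of rows is invariant under the permutation: i₁(Σ_{t∈T} g_t) = i₁(Σ_{t∈T} g_{σ(t)}). -/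
open Finset

/-- Kernel entry as a function of bits. -/
def Kb : Bool → Bool → ZMod 2 := fun a b =>
  polarKernel (if a then 1 else 0) (if b then 1 else 0)

lemma fin2_div (n j : ℕ) (h2 : j / 2 ^ n < 2) :
    (⟨j / 2 ^ n, h2⟩ : Fin 2) = if Nat.testBit j n then 1 else 0 := by
  have ht : Nat.testBit j n = decide (j / 2 ^ n % 2 = 1) := Nat.testBit_eq_decide_div_mod_eq
  interval_cases h' : j / 2 ^ n <;> simp_all

lemma polarG_entry (n : ℕ) (j c : Fin (2 ^ n)) :
    polarG n j c = ∏ ℓ : Fin n, Kb (Nat.testBit j ℓ) (Nat.testBit c ℓ) := by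
  induction n with
  | zero =>
    have : j = c := by omega
    simp [polarG, Matrix.one_apply, this]
  | succ n ih =>
    have hj : (j : ℕ) < 2 ^ n * 2 := by
      have := j.isLt; exact lt_of_lt_of_eq this (pow_succ 2 n)
    have hc : (c : ℕ) < 2 ^ n * 2 := by
      have := c.isLt; exact lt_of_lt_of_eq this (pow_succ 2 n)
    have hstep : polarG (n+1) j c =
        polarKernel ⟨(j : ℕ) / 2 ^ n, Nat.div_lt_of_lt_mul hj⟩
          ⟨(c : ℕ) / 2 ^ n, Nat.div_lt_of_lt_mul hc⟩ *
        polarG n ⟨(j : ℕ) % 2 ^ n, Nat.mod_lt _ (by positivity)⟩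
          ⟨(c : ℕ) % 2 ^ n, Nat.mod_lt _ (by positivity)⟩ := rfl
    rw [hstep, ih, Fin.prod_univ_castSucc]
    rw [fin2_div, fin2_div]
    rw [mul_comm]
    congr 1
    · apply Finset.prod_congr rfl
      intro ℓ _
      simp [Nat.testBit_mod_two_pow, ℓ.isLt]

/-- invariance of the Hamming weight of a sum of rows under a
permutation of bit positions of the row indices. -/
theorem hamming_weight_invariant_under_bit_permutation (n : ℕ) (π : Equiv.Perm (Fin n))
    (σ : Fin (2 ^ n) → Fin (2 ^ n))
    (hσ : ∀ j : Fin (2 ^ n), ∀ ℓ : Fin n,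
      Nat.testBit (σ j : ℕ) (ℓ : ℕ) = Nat.testBit (j : ℕ) ((π ℓ : Fin n) : ℕ))
    (T : Finset (Fin (2 ^ n))) :
    hammingWeight (∑ t ∈ T, row n t) = hammingWeight (∑ t ∈ T, row n (σ t)) := by
  have hinj : Function.Injective σ := by
    intro a b hab
    apply Fin.ext
    apply Nat.eq_of_testBit_eq
    intro m
    rcases lt_or_ge m n with hm | hm
    · have ha := hσ a (π.symm ⟨m, hm⟩)
      have hb := hσ b (π.symm ⟨m, hm⟩)
      simp only [Equiv.apply_symm_apply] at ha hb
      rw [← ha, ← hb, hab]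
    · have h2 : (2:ℕ) ^ n ≤ 2 ^ m := Nat.pow_le_pow_right (by norm_num) hm
      rw [Nat.testBit_lt_two_pow (lt_of_lt_of_le a.isLt h2),
        Nat.testBit_lt_two_pow (lt_of_lt_of_le b.isLt h2)]
  have hbij : Function.Bijective σ := Finite.injective_iff_bijective.mp hinj
  set e := Equiv.ofBijective σ hbij with he
  have hkey : ∀ t c, row n (σ t) c = row n t (e.symm c) := by
    intro t c
    have hc : σ (e.symm c) = c := e.apply_symm_apply c
    simp only [row, polarG_entry]
    rw [← Equiv.prod_comp π (fun ℓ => Kb (Nat.testBit t ℓ) (Nat.testBit (e.symm c) ℓ))]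
    apply Finset.prod_congr rfl
    intro ℓ _
    conv_lhs => rw [hσ t ℓ, ← hc, hσ (e.symm c) ℓ]
  have hsum : ∀ c, (∑ t ∈ T, row n (σ t)) c = (∑ t ∈ T, row n t) (e.symm c) := by
    intro c
    simp only [Finset.sum_apply]
    exact Finset.sum_congr rfl fun t _ => hkey t c
  unfold hammingWeight
  apply Finset.card_equiv e
  intro i
  simp [hsum]
end

section
/- Let n ∈ ℕ, N = 2^n, and let G be the n-fold Kronecker power over 𝔽₂ of the kernel [[1,0],[1,1]]. Suppose i, j ∈ {0,…,N−1} with i ≠ j satisfy popcount(i) = popcount(j) = ℓ ≥ 2. Then for every T ⊆ {t ∈ {0,…,N−1} : popcount(t) ≥ ℓ+1}, i₁(g_i + g_j + Σ_{t∈T} g_t) ≥ i₁(g_i + g_j) = 2^{ℓ+1} − 2^{popcount(i AND j)+1}. -/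
open Finset

/-!
Index rows and columns of `G` by their sets of binary digits. Then `g_t` has a one in column `c`
exactly when `c ⊆ t`, so a sum of rows `∑_{t ∈ φ} g_t` is the function
`c ↦ #{t ∈ φ | c ⊆ t} mod 2`. With `I`, `J` the digit sets of `i`, `j`, the pair `g_i + g_j` is
supported on `𝒫 I ∆ 𝒫 J`, which has `2^(ℓ+1) - 2^(|I ∩ J|+1)` elements.

The lower bound is proved by induction on a ground set `u` containing all members of `φ`. A digit
`k ∈ I ∩ J` splits the columns into those avoiding and those containing `k`; on each half the sum
is again given by a merged pair `I \ {k}, J \ {k}`, so the bound doubles. A digit `k ∉ I ∪ J` is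
discarded: the two halves add up to the family of members avoiding `k`, and weight is
subadditive. What remains is `u = I ∪ J` with `I`, `J` disjoint, where the columns form the grid
`𝒫 I × 𝒫 J`. Parity counts show that every row and column of the grid has odd weight, and that
all rows of weight one have their one in the same column `{i ∈ I | insert i J ∈ φ}` (likewise
for columns); counting then forces at least `2^(ℓ+1) - 2` ones.
-/

open scoped symmDiff

namespace PolarWeight

lemma sum_symmDiff_zmod_two {α : Type*} [DecidableEq α] (s t : Finset α) (g : α → ZMod 2) :
    ∑ a ∈ s ∆ t, g a = ∑ a ∈ s, g a + ∑ a ∈ t, g a := by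
  have hunion : s ∪ t = s ∆ t ∪ s ∩ t := (symmDiff_sup_inf s t).symm
  have hdisj : Disjoint (s ∆ t) (s ∩ t) := disjoint_symmDiff_inf s t
  rw [← Finset.sum_union_inter, hunion, Finset.sum_union hdisj, add_assoc,
    CharTwo.add_self_eq_zero, add_zero]

lemma card_symmDiff_add_two_mul_card_inter {α : Type*} [DecidableEq α] (s t : Finset α) :
    #(s ∆ t) + 2 * #(s ∩ t) = #s + #t := by
  have hunion : s ∪ t = s ∆ t ∪ s ∩ t := (symmDiff_sup_inf s t).symm
  have hdisj : Disjoint (s ∆ t) (s ∩ t) := disjoint_symmDiff_inf s t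
  rw [← Finset.card_union_add_card_inter, hunion, Finset.card_union_of_disjoint hdisj]
  ring

lemma natCast_card_filter_ne_zero {α : Type*} (s : Finset α) (F : α → ZMod 2) :
    (#{a ∈ s | F a ≠ 0} : ZMod 2) = ∑ a ∈ s, F a := by
  rw [Finset.natCast_card_filter]
  refine Finset.sum_congr rfl fun a _ => ?_
  generalize F a = x
  fin_cases x <;> rfl

lemma natCast_card_Icc_finset {α : Type*} [DecidableEq α] (s t : Finset α) :
    (#(Icc s t) : ZMod 2) = if s = t then 1 else 0 := by
  by_cases hst : s ⊆ t
  · rw [Finset.card_Icc_finset hst, Nat.cast_pow, Nat.cast_ofNat]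
    by_cases h : s = t
    · simp [h]
    · have : #s < #t := Finset.card_lt_card (Finset.ssubset_iff_subset_ne.2 ⟨hst, h⟩)
      rw [if_neg h, ← Nat.succ_pred_eq_of_pos (Nat.sub_pos_of_lt this), pow_succ,
        show (2 : ZMod 2) = 0 from rfl, mul_zero]
  · rw [Finset.Icc_eq_empty hst, if_neg (fun h => hst h.le)]
    rfl

/-- Column `c` of `∑_{t ∈ φ} g_t`, when rows and columns are indexed by their sets of binary
digits: `g_t` has a one in column `c` exactly when `c ⊆ t`. -/
def subsetParity (φ : Finset (Finset ℕ)) (c : Finset ℕ) : ZMod 2 :=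
  ∑ t ∈ φ, if c ⊆ t then 1 else 0

def weightOn (u : Finset ℕ) (F : Finset ℕ → ZMod 2) : ℕ := #{c ∈ u.powerset | F c ≠ 0}

lemma weightOn_congr {u : Finset ℕ} {F G : Finset ℕ → ZMod 2} (h : ∀ c ⊆ u, F c = G c) :
    weightOn u F = weightOn u G := by
  unfold weightOn
  congr 1
  exact Finset.filter_congr fun c hc => by rw [h c (Finset.mem_powerset.1 hc)]

lemma weightOn_add_le (u : Finset ℕ) (F G : Finset ℕ → ZMod 2) :
    weightOn u (F + G) ≤ weightOn u F + weightOn u G := by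
  refine (Finset.card_le_card fun c hc => ?_).trans (Finset.card_union_le _ _)
  simp only [Finset.mem_filter, Finset.mem_union, Pi.add_apply] at hc ⊢
  by_cases hF : F c = 0
  · exact Or.inr ⟨hc.1, by simpa [hF] using hc.2⟩
  · exact Or.inl ⟨hc.1, hF⟩

lemma weightOn_eq_add_weightOn_insert {u : Finset ℕ} {k : ℕ} (hk : k ∈ u)
    (F : Finset ℕ → ZMod 2) :
    weightOn u F = weightOn (u.erase k) F + weightOn (u.erase k) (fun c => F (insert k c)) := by
  simp only [weightOn, Finset.card_filter]
  rw [← Finset.insert_erase hk, Finset.sum_powerset_insert (Finset.notMem_erase k u),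
    Finset.erase_insert (Finset.notMem_erase k u)]

lemma weightOn_pair {u I J : Finset ℕ} (hI : I ⊆ u) (hJ : J ⊆ u) (hIJ : I ≠ J) :
    weightOn u (subsetParity {I, J}) + 2 * 2 ^ #(I ∩ J) = 2 ^ #I + 2 ^ #J := by
  have hsupport : {c ∈ u.powerset | subsetParity {I, J} c ≠ 0} = I.powerset ∆ J.powerset := by
    ext c
    simp only [subsetParity, Finset.sum_pair hIJ, Finset.mem_filter, Finset.mem_powerset,
      Finset.mem_symmDiff]
    by_cases hcI : c ⊆ I <;> by_cases hcJ : c ⊆ J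
    · have h2 : (1 + 1 : ZMod 2) = 0 := rfl
      simp [hcI, hcJ, h2]
    · simp [hcI, hcJ, hcI.trans hI]
    · simp [hcI, hcJ, hcJ.trans hJ]
    · simp [hcI, hcJ]
  have hinter : (I ∩ J).powerset = I.powerset ∩ J.powerset := by
    ext c
    simp only [Finset.mem_powerset, Finset.mem_inter, Finset.subset_inter_iff]
  rw [weightOn, hsupport, ← Finset.card_powerset (I ∩ J), hinter, ← Finset.card_powerset,
    ← Finset.card_powerset, card_symmDiff_add_two_mul_card_inter]

section Cofactor

variable {φ : Finset (Finset ℕ)} {k : ℕ} {c : Finset ℕ}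

lemma subsetParity_filter_notMem :
    subsetParity {t ∈ φ | k ∉ t} c = subsetParity φ c + subsetParity φ (insert k c) := by
  simp only [subsetParity, Finset.sum_filter, ← Finset.sum_add_distrib]
  refine Finset.sum_congr rfl fun t _ => ?_
  by_cases hkt : k ∈ t
  · simp only [hkt, not_true_eq_false, if_false, Finset.insert_subset_iff, true_and]
    split_ifs <;> decide
  · simp [hkt, Finset.insert_subset_iff]

def cofactorOne (φ : Finset (Finset ℕ)) (k : ℕ) : Finset (Finset ℕ) :=
  {t ∈ φ | k ∈ t}.image (·.erase k)

/-- A family whose parity function agrees with that of `φ` on the sets avoiding `k`, and whose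
members avoid `k`. -/
def cofactorZero (φ : Finset (Finset ℕ)) (k : ℕ) : Finset (Finset ℕ) :=
  {t ∈ φ | k ∉ t} ∆ cofactorOne φ k

lemma subsetParity_cofactorOne (hkc : k ∉ c) :
    subsetParity (cofactorOne φ k) c = subsetParity φ (insert k c) := by
  have hinj : Set.InjOn (fun t : Finset ℕ => t.erase k) ({t ∈ φ | k ∈ t} : Finset (Finset ℕ)) :=
    (Finset.erase_injOn' k).mono fun t ht => (Finset.mem_filter.1 ht).2
  rw [subsetParity, cofactorOne, Finset.sum_image hinj, Finset.sum_filter, subsetParity]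
  refine Finset.sum_congr rfl fun t _ => ?_
  by_cases hkt : k ∈ t
  · simp [hkt, Finset.insert_subset_iff, Finset.subset_erase, hkc]
  · simp [hkt, Finset.insert_subset_iff]

lemma subsetParity_cofactorZero (hkc : k ∉ c) :
    subsetParity (cofactorZero φ k) c = subsetParity φ c := by
  rw [subsetParity, cofactorZero, sum_symmDiff_zmod_two, ← subsetParity, ← subsetParity,
    subsetParity_filter_notMem, subsetParity_cofactorOne hkc, add_assoc,
    CharTwo.add_self_eq_zero, add_zero]

lemma subset_erase_of_mem_cofactorOne {u t : Finset ℕ} (hφ : ∀ s ∈ φ, s ⊆ u)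
    (ht : t ∈ cofactorOne φ k) : t ⊆ u.erase k := by
  obtain ⟨s, hs, rfl⟩ := Finset.mem_image.1 ht
  exact Finset.erase_subset_erase k (hφ s (Finset.mem_filter.1 hs).1)

lemma subset_erase_of_mem_filter_notMem {u t : Finset ℕ} (hφ : ∀ s ∈ φ, s ⊆ u)
    (ht : t ∈ {s ∈ φ | k ∉ s}) : t ⊆ u.erase k := by
  rw [Finset.mem_filter] at ht
  exact Finset.subset_erase.2 ⟨hφ t ht.1, ht.2⟩

lemma subset_erase_of_mem_cofactorZero {u t : Finset ℕ} (hφ : ∀ s ∈ φ, s ⊆ u)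
    (ht : t ∈ cofactorZero φ k) : t ⊆ u.erase k := by
  rcases Finset.mem_symmDiff.1 ht with ⟨ht, -⟩ | ⟨ht, -⟩
  exacts [subset_erase_of_mem_filter_notMem hφ ht, subset_erase_of_mem_cofactorOne hφ ht]

lemma weightOn_eq_add_cofactor {u : Finset ℕ} (hku : k ∈ u) :
    weightOn u (subsetParity φ) = weightOn (u.erase k) (subsetParity (cofactorZero φ k)) +
      weightOn (u.erase k) (subsetParity (cofactorOne φ k)) := by
  rw [weightOn_eq_add_weightOn_insert hku]
  congr 1 <;> refine weightOn_congr fun c hc => ?_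
  · rw [subsetParity_cofactorZero fun hkc => Finset.notMem_erase k u (hc hkc)]
  · rw [subsetParity_cofactorOne fun hkc => Finset.notMem_erase k u (hc hkc)]

lemma weightOn_filter_notMem_le {u : Finset ℕ} (hku : k ∈ u) :
    weightOn (u.erase k) (subsetParity {t ∈ φ | k ∉ t}) ≤ weightOn u (subsetParity φ) := by
  rw [weightOn_eq_add_weightOn_insert hku]
  calc weightOn (u.erase k) (subsetParity {t ∈ φ | k ∉ t})
      = weightOn (u.erase k) (subsetParity φ + fun c => subsetParity φ (insert k c)) :=
        congrArg _ (funext fun _ => subsetParity_filter_notMem)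
    _ ≤ _ := weightOn_add_le _ _ _

end Cofactor

/-- `φ` plays the role of the bit sets of the rows summed in the theorem, `I` and `J` those of
`i` and `j`. -/
structure MergedPair (I J : Finset ℕ) (φ : Finset (Finset ℕ)) : Prop where
  ne : I ≠ J
  card_eq : #I = #J
  left_mem : I ∈ φ
  right_mem : J ∈ φ
  card_lt : ∀ t ∈ φ, t ≠ I → t ≠ J → #I < #t

namespace MergedPair

variable {I J : Finset ℕ} {φ : Finset (Finset ℕ)} {k : ℕ}

lemma symm (h : MergedPair I J φ) : MergedPair J I φ where
  ne := h.ne.symm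
  card_eq := h.card_eq.symm
  left_mem := h.right_mem
  right_mem := h.left_mem
  card_lt t ht htJ htI := h.card_eq ▸ h.card_lt t ht htI htJ

lemma card_pos (h : MergedPair I J φ) : 0 < #I := by
  by_contra h0
  have hI : I = ∅ := Finset.card_eq_zero.1 (by omega)
  have hJ : J = ∅ := Finset.card_eq_zero.1 (by rw [← h.card_eq]; omega)
  exact h.ne (hI.trans hJ.symm)

lemma filter_notMem (h : MergedPair I J φ) (hkI : k ∉ I) (hkJ : k ∉ J) :
    MergedPair I J {t ∈ φ | k ∉ t} where
  ne := h.ne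
  card_eq := h.card_eq
  left_mem := Finset.mem_filter.2 ⟨h.left_mem, hkI⟩
  right_mem := Finset.mem_filter.2 ⟨h.right_mem, hkJ⟩
  card_lt t ht := h.card_lt t (Finset.mem_filter.1 ht).1

lemma cofactorOne (h : MergedPair I J φ) (hkI : k ∈ I) (hkJ : k ∈ J) :
    MergedPair (I.erase k) (J.erase k) (cofactorOne φ k) where
  ne hIJ := h.ne (Finset.erase_injOn' k hkI hkJ hIJ)
  card_eq := by rw [Finset.card_erase_of_mem hkI, Finset.card_erase_of_mem hkJ, h.card_eq]
  left_mem := Finset.mem_image_of_mem _ (Finset.mem_filter.2 ⟨h.left_mem, hkI⟩)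
  right_mem := Finset.mem_image_of_mem _ (Finset.mem_filter.2 ⟨h.right_mem, hkJ⟩)
  card_lt t ht htI htJ := by
    obtain ⟨s, hs, rfl⟩ := Finset.mem_image.1 ht
    obtain ⟨hsφ, hks⟩ := Finset.mem_filter.1 hs
    have hlt := h.card_lt s hsφ (by rintro rfl; exact htI rfl) (by rintro rfl; exact htJ rfl)
    rw [← Finset.card_erase_add_one hkI, ← Finset.card_erase_add_one hks] at hlt
    omega

lemma cofactorZero (h : MergedPair I J φ) (hkI : k ∈ I) (hkJ : k ∈ J) :
    MergedPair (I.erase k) (J.erase k) (cofactorZero φ k) := by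
  have h₁ := h.cofactorOne hkI hkJ
  have hnotMem : ∀ s, #s < #I → s ∉ {t ∈ φ | k ∉ t} := fun s hs hsφ => by
    rw [Finset.mem_filter] at hsφ
    have := h.card_lt s hsφ.1 (by rintro rfl; exact hsφ.2 hkI) (by rintro rfl; exact hsφ.2 hkJ)
    omega
  have herase : ∀ {s}, k ∈ s → #(s.erase k) < #s := fun hs => Finset.card_erase_lt_of_mem hs
  refine ⟨h₁.ne, h₁.card_eq, ?_, ?_, fun t ht htI htJ => ?_⟩
  · exact Finset.mem_symmDiff.2 (Or.inr ⟨h₁.left_mem, hnotMem _ (herase hkI)⟩)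
  · exact Finset.mem_symmDiff.2 (Or.inr ⟨h₁.right_mem, hnotMem _ (h.card_eq ▸ herase hkJ)⟩)
  · rcases Finset.mem_symmDiff.1 ht with ⟨ht, -⟩ | ⟨ht, -⟩
    · obtain ⟨htφ, hkt⟩ := Finset.mem_filter.1 ht
      have := h.card_lt t htφ (by rintro rfl; exact hkt hkI) (by rintro rfl; exact hkt hkJ)
      have := herase hkI
      omega
    · exact h₁.card_lt t ht htI htJ

end MergedPair

lemma three_mul_card_le_sum_add {κ : Type*} (S : Finset κ) (g : κ → ℕ)
    (hg : ∀ k ∈ S, Odd (g k)) :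
    3 * #S ≤ ∑ k ∈ S, g k + 2 * #{k ∈ S | g k = 1} := by
  calc 3 * #S = ∑ _k ∈ S, 3 := by rw [Finset.sum_const, smul_eq_mul, mul_comm]
    _ ≤ ∑ k ∈ S, (g k + 2 * if g k = 1 then 1 else 0) := Finset.sum_le_sum fun k hk => by
        obtain ⟨m, hm⟩ := hg k hk
        split_ifs <;> omega
    _ = ∑ k ∈ S, g k + 2 * #{k ∈ S | g k = 1} := by
        rw [Finset.sum_add_distrib, ← Finset.mul_sum, Finset.card_filter]

section Fibers

variable {ι κ μ : Type*} [DecidableEq κ] [DecidableEq μ]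

def fiberCard (E : Finset ι) (p : ι → κ) (k : κ) : ℕ := #{e ∈ E | p e = k}

variable {E : Finset ι} {p : ι → κ} {K : Finset κ}

lemma card_eq_sum_fiberCard (hE : ∀ e ∈ E, p e ∈ K) : #E = ∑ k ∈ K, fiberCard E p k :=
  Finset.card_eq_sum_card_fiberwise hE

lemma three_mul_card_le_card_add (hE : ∀ e ∈ E, p e ∈ K) (hodd : ∀ k ∈ K, Odd (fiberCard E p k)) :
    3 * #K ≤ #E + 2 * #{k ∈ K | fiberCard E p k = 1} := by
  rw [card_eq_sum_fiberCard hE]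
  exact three_mul_card_le_sum_add K _ hodd

lemma fiberCard_add_three_mul_le (hE : ∀ e ∈ E, p e ∈ K)
    (hodd : ∀ k ∈ K, Odd (fiberCard E p k)) {k₀ : κ} (hk₀ : k₀ ∈ K) :
    fiberCard E p k₀ + 3 * (#K - 1) ≤ #E + 2 * #{k ∈ K | fiberCard E p k = 1} := by
  have hsum := three_mul_card_le_sum_add (K.erase k₀) (fiberCard E p)
    fun k hk => hodd k (Finset.mem_of_mem_erase hk)
  have hsub : #{k ∈ K.erase k₀ | fiberCard E p k = 1} ≤ #{k ∈ K | fiberCard E p k = 1} :=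
    Finset.card_le_card (Finset.filter_subset_filter _ (Finset.erase_subset k₀ K))
  rw [Finset.card_erase_of_mem hk₀] at hsum
  rw [card_eq_sum_fiberCard hE, ← Finset.add_sum_erase K _ hk₀]
  omega

lemma card_filter_fiberCard_eq_one (hE : ∀ e ∈ E, p e ∈ K) :
    #{e ∈ E | fiberCard E p (p e) = 1} = #{k ∈ K | fiberCard E p k = 1} := by
  rw [Finset.card_eq_sum_card_fiberwise (t := {k ∈ K | fiberCard E p k = 1})
    fun e he => Finset.mem_filter.2 ⟨hE e (Finset.mem_filter.1 he).1, (Finset.mem_filter.1 he).2⟩,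
    Finset.card_eq_sum_ones]
  refine Finset.sum_congr rfl fun k hk => ?_
  have hk1 := (Finset.mem_filter.1 hk).2
  rw [Finset.filter_filter]
  calc #{e ∈ E | fiberCard E p (p e) = 1 ∧ p e = k} = fiberCard E p k :=
        congrArg Finset.card (Finset.filter_congr fun e _ => ⟨And.right, fun h => ⟨h ▸ hk1, h⟩⟩)
    _ = 1 := hk1

lemma card_filter_fiberCard_eq_one_le {q : ι → μ} {m : μ}
    (hE : ∀ e ∈ E, p e ∈ K) (hq : ∀ e ∈ E, fiberCard E p (p e) = 1 → q e = m) :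
    #{k ∈ K | fiberCard E p k = 1} ≤ fiberCard E q m := by
  rw [← card_filter_fiberCard_eq_one hE]
  exact Finset.card_le_card fun e he => by
    obtain ⟨he, h1⟩ := Finset.mem_filter.1 he
    exact Finset.mem_filter.2 ⟨he, hq e he h1⟩

end Fibers

theorem two_mul_card_le_card_add_two {α β : Type*} [DecidableEq α] [DecidableEq β]
    {E : Finset (α × β)} {X : Finset α} {Y : Finset β}
    (hEX : ∀ e ∈ E, e.1 ∈ X) (hEY : ∀ e ∈ E, e.2 ∈ Y) (hXY : #X = #Y)
    (hX : ∀ x ∈ X, Odd (fiberCard E Prod.fst x)) (hY : ∀ y ∈ Y, Odd (fiberCard E Prod.snd y))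
    {x₀ : α} {y₀ : β} (hx₀ : x₀ ∈ X) (hy₀ : y₀ ∈ Y)
    (hx₀E : ∀ e ∈ E, fiberCard E Prod.snd e.2 = 1 → e.1 = x₀)
    (hy₀E : ∀ e ∈ E, fiberCard E Prod.fst e.1 = 1 → e.2 = y₀) :
    2 * #Y ≤ #E + 2 := by
  have hrows := three_mul_card_le_card_add hEY hY
  have hcols := three_mul_card_le_card_add hEX hX
  by_cases hs : #{y ∈ Y | fiberCard E Prod.snd y = 1} ≤ 1 ∨
    #{x ∈ X | fiberCard E Prod.fst x = 1} ≤ 1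
  · omega
  have hx₀s := card_filter_fiberCard_eq_one_le hEY hx₀E
  have hy₀s := card_filter_fiberCard_eq_one_le hEX hy₀E
  have hrow₀ := fiberCard_add_three_mul_le hEY hY hy₀
  have hcol₀ := fiberCard_add_three_mul_le hEX hX hx₀
  have hY₀ : 0 < #Y := Finset.card_pos.2 ⟨y₀, hy₀⟩
  -- a singleton row and a singleton column cannot meet: that entry would lie in column `x₀`
  have hdisj : Disjoint {e ∈ E | fiberCard E Prod.snd e.2 = 1}
      {e ∈ E | fiberCard E Prod.fst e.1 = 1} := by
    rw [Finset.disjoint_filter]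
    intro e he h₁ h₂
    rw [hx₀E e he h₁] at h₂
    omega
  have hunion := Finset.card_le_card (Finset.union_subset
    (Finset.filter_subset (fun e => fiberCard E Prod.snd e.2 = 1) E)
    (Finset.filter_subset (fun e => fiberCard E Prod.fst e.1 = 1) E))
  rw [Finset.card_union_of_disjoint hdisj, card_filter_fiberCard_eq_one hEY,
    card_filter_fiberCard_eq_one hEX] at hunion
  -- adding the bounds through row `y₀` and column `x₀` to `#(singleton rows) + #(singleton
  -- columns) ≤ #E` gives `6 #Y - 6 ≤ 3 #E`
  omega

def gridSupport (X Y : Finset ℕ) (F : Finset ℕ → ZMod 2) : Finset (Finset ℕ × Finset ℕ) :=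
  {e ∈ X.powerset ×ˢ Y.powerset | F (e.1 ∪ e.2) ≠ 0}

section Grid

variable {X Y : Finset ℕ} {F : Finset ℕ → ZMod 2}

lemma mem_gridSupport {e : Finset ℕ × Finset ℕ} :
    e ∈ gridSupport X Y F ↔ e.1 ⊆ X ∧ e.2 ⊆ Y ∧ F (e.1 ∪ e.2) ≠ 0 := by
  simp [gridSupport, and_assoc]

lemma union_inter_eq_left {x y : Finset ℕ} (hXY : Disjoint X Y) (hx : x ⊆ X) (hy : y ⊆ Y) :
    (x ∪ y) ∩ X = x := by
  rw [Finset.union_inter_distrib_right, Finset.inter_eq_left.2 hx,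
    Finset.disjoint_iff_inter_eq_empty.1 (hXY.symm.mono_left hy), Finset.union_empty]

lemma card_gridSupport (hXY : Disjoint X Y) : #(gridSupport X Y F) = weightOn (X ∪ Y) F := by
  have hsplit : ∀ c ⊆ X ∪ Y, c ∩ X ∪ c ∩ Y = c := fun c hc => by
    rw [← Finset.inter_union_distrib_left, Finset.inter_eq_left.2 hc]
  refine Finset.card_nbij' (fun e => e.1 ∪ e.2) (fun c => (c ∩ X, c ∩ Y)) ?_ ?_ ?_ ?_
  · intro e he
    obtain ⟨hx, hy, hF⟩ := mem_gridSupport.1 he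
    exact Finset.mem_filter.2 ⟨Finset.mem_powerset.2 (Finset.union_subset_union hx hy), hF⟩
  · intro c hc
    obtain ⟨hc, hF⟩ := Finset.mem_filter.1 hc
    rw [Finset.mem_powerset] at hc
    exact mem_gridSupport.2 ⟨Finset.inter_subset_right, Finset.inter_subset_right,
      by rwa [hsplit c hc]⟩
  · intro e he
    obtain ⟨hx, hy, -⟩ := mem_gridSupport.1 he
    simp only
    rw [union_inter_eq_left hXY hx hy, Finset.union_comm, union_inter_eq_left hXY.symm hy hx]
  · intro c hc
    exact hsplit c (Finset.mem_powerset.1 (Finset.mem_filter.1 hc).1)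

lemma map_prodComm_gridSupport :
    (gridSupport X Y F).map (Equiv.prodComm _ _).toEmbedding = gridSupport Y X F := by
  ext ⟨y, x⟩
  simp only [Finset.mem_map_equiv, Equiv.prodComm_symm, Equiv.prodComm_apply, Prod.fst_swap,
    Prod.snd_swap, mem_gridSupport, Finset.union_comm x y]
  tauto

lemma fiberCard_fst_gridSupport (x : Finset ℕ) :
    fiberCard (gridSupport X Y F) Prod.fst x = fiberCard (gridSupport Y X F) Prod.snd x := by
  rw [← map_prodComm_gridSupport, fiberCard, fiberCard, Finset.filter_map, Finset.card_map]
  rfl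

lemma natCast_card_filter_gridSupport {b : Finset ℕ} (hb : b ⊆ Y) (p : Finset ℕ → Prop)
    [DecidablePred p] :
    (#{e ∈ gridSupport X Y F | e.2 = b ∧ p e.1} : ZMod 2) =
      ∑ x ∈ X.powerset with p x, F (x ∪ b) := by
  rw [← natCast_card_filter_ne_zero]
  congr 1
  refine Finset.card_nbij' Prod.fst (fun x => (x, b)) ?_ ?_ ?_ ?_
  · intro e he
    simp only [Finset.coe_filter, Finset.mem_filter, Finset.mem_powerset, mem_gridSupport] at he ⊢
    obtain ⟨⟨hx, -, hF⟩, rfl, hp⟩ := he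
    exact ⟨⟨hx, hp⟩, hF⟩
  · intro x hx
    simp only [Finset.coe_filter, Finset.mem_filter, Finset.mem_powerset, mem_gridSupport] at hx ⊢
    exact ⟨⟨hx.1.1, hb, hx.2⟩, rfl, hx.1.2⟩
  · intro e he
    simp only [Finset.coe_filter] at he
    exact Prod.ext rfl he.2.1.symm
  · intro x _
    rfl

end Grid

section Disjoint

variable {I J : Finset ℕ} {φ : Finset (Finset ℕ)}

lemma sum_subsetParity_union {S : Finset ℕ} (b : Finset ℕ) :
    ∑ x ∈ I.powerset with S ⊆ x, subsetParity φ (x ∪ b) =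
      ∑ t ∈ φ, if b ⊆ t ∧ I ∩ t = S then 1 else 0 := by
  unfold subsetParity
  rw [Finset.sum_comm]
  refine Finset.sum_congr rfl fun t _ => ?_
  by_cases hbt : b ⊆ t
  · have hIcc : {x ∈ I.powerset | S ⊆ x ∧ x ⊆ t} = Icc S (I ∩ t) := by
      ext x
      simp only [Finset.mem_filter, Finset.mem_powerset, Finset.mem_Icc,
        Finset.subset_inter_iff]
      tauto
    simp only [Finset.union_subset_iff, hbt, and_true, true_and, Finset.sum_boole,
      Finset.filter_filter, hIcc, natCast_card_Icc_finset, eq_comm]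
  · simp [Finset.union_subset_iff, hbt]

lemma filter_subset_inter_eq (h : MergedPair I J φ) (hIJ : Disjoint I J)
    (hφ : ∀ t ∈ φ, t ⊆ I ∪ J) {S b : Finset ℕ} (hSI : S ⊆ I) (hS : S ≠ I) (hS₁ : #S ≤ 1)
    (hb : b ⊆ J) :
    {t ∈ φ | b ⊆ t ∧ I ∩ t = S} = {t ∈ φ | t = S ∪ J} := by
  have hIJ' : I ∩ J = ∅ := Finset.disjoint_iff_inter_eq_empty.1 hIJ
  ext t
  simp only [Finset.mem_filter, and_congr_right_iff]
  intro htφ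
  constructor
  · rintro ⟨-, hIt⟩
    have htSJ : t ⊆ S ∪ J := fun x hx => by
      rcases Finset.mem_union.1 (hφ t htφ hx) with hxI | hxJ
      · exact Finset.mem_union_left J (hIt ▸ Finset.mem_inter.2 ⟨hxI, hx⟩)
      · exact Finset.mem_union_right S hxJ
    by_cases htJ : t = J
    · subst htJ
      rw [← hIt, hIJ', Finset.empty_union]
    have htI : t ≠ I := fun htI => hS (by rw [← hIt, htI, Finset.inter_self])
    refine Finset.eq_of_subset_of_card_le htSJ ?_
    have := h.card_lt t htφ htI htJ
    have := Finset.card_union_le S J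
    rw [← h.card_eq] at this
    omega
  · rintro rfl
    refine ⟨hb.trans Finset.subset_union_right, ?_⟩
    rw [Finset.inter_union_distrib_left, hIJ', Finset.union_empty, Finset.inter_eq_right.2 hSI]

lemma sum_subsetParity_union_eq (h : MergedPair I J φ) (hIJ : Disjoint I J)
    (hφ : ∀ t ∈ φ, t ⊆ I ∪ J) {S b : Finset ℕ} (hSI : S ⊆ I) (hS : S ≠ I) (hS₁ : #S ≤ 1)
    (hb : b ⊆ J) :
    ∑ x ∈ I.powerset with S ⊆ x, subsetParity φ (x ∪ b) = if S ∪ J ∈ φ then 1 else 0 := by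
  rw [sum_subsetParity_union, Finset.sum_boole, filter_subset_inter_eq h hIJ hφ hSI hS hS₁ hb,
    Finset.filter_eq']
  split_ifs <;> simp

lemma odd_fiberCard_snd_gridSupport (h : MergedPair I J φ) (hIJ : Disjoint I J)
    (hφ : ∀ t ∈ φ, t ⊆ I ∪ J) {b : Finset ℕ} (hb : b ⊆ J) :
    Odd (fiberCard (gridSupport I J (subsetParity φ)) Prod.snd b) := by
  have hI : ∅ ≠ I := fun hI => (Finset.card_pos.1 h.card_pos).ne_empty hI.symm
  have hsum := sum_subsetParity_union_eq h hIJ hφ (Finset.empty_subset I) hI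
    (by rw [Finset.card_empty]; omega) hb
  rw [Finset.empty_union, if_pos h.right_mem, ← natCast_card_filter_gridSupport hb] at hsum
  simpa [fiberCard, ZMod.natCast_eq_one_iff_odd] using hsum

lemma fst_eq_of_fiberCard_snd_eq_one (h : MergedPair I J φ) (hIJ : Disjoint I J)
    (hφ : ∀ t ∈ φ, t ⊆ I ∪ J) (hI : 2 ≤ #I) {e : Finset ℕ × Finset ℕ}
    (he : e ∈ gridSupport I J (subsetParity φ))
    (h₁ : fiberCard (gridSupport I J (subsetParity φ)) Prod.snd e.2 = 1) :
    e.1 = {i ∈ I | insert i J ∈ φ} := by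
  obtain ⟨hx, hb, -⟩ := mem_gridSupport.1 he
  have hrow : {e' ∈ gridSupport I J (subsetParity φ) | e'.2 = e.2} = {e} := by
    obtain ⟨e', he'⟩ := Finset.card_eq_one.1 h₁
    have hmem : e ∈ {e' ∈ gridSupport I J (subsetParity φ) | e'.2 = e.2} :=
      Finset.mem_filter.2 ⟨he, rfl⟩
    rw [he', Finset.mem_singleton] at hmem
    rw [he', hmem]
  have hmem : ∀ i ∈ I, (i ∈ e.1 ↔ insert i J ∈ φ) := by
    intro i hi
    have hsum := sum_subsetParity_union_eq h hIJ hφ (Finset.singleton_subset_iff.2 hi)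
      (fun hiI => by rw [← hiI, Finset.card_singleton] at hI; omega)
      (by rw [Finset.card_singleton]) hb
    rw [← Finset.insert_eq, ← natCast_card_filter_gridSupport hb, ← Finset.filter_filter, hrow,
      Finset.filter_singleton] at hsum
    by_cases hie : i ∈ e.1 <;> by_cases hiJ : insert i J ∈ φ <;> simp [hie, hiJ] at hsum ⊢
  ext i
  rw [Finset.mem_filter]
  exact ⟨fun hi => ⟨hx hi, (hmem i (hx hi)).1 hi⟩, fun ⟨hiI, hiJ⟩ => (hmem i hiI).2 hiJ⟩

theorem two_pow_le_weightOn_union_add_two (h : MergedPair I J φ) (hIJ : Disjoint I J)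
    (hφ : ∀ t ∈ φ, t ⊆ I ∪ J) :
    2 ^ (#I + 1) ≤ weightOn (I ∪ J) (subsetParity φ) + 2 := by
  rw [← card_gridSupport hIJ, pow_succ]
  have hφ' : ∀ t ∈ φ, t ⊆ J ∪ I := fun t ht => Finset.union_comm I J ▸ hφ t ht
  set E := gridSupport I J (subsetParity φ)
  have hEX : ∀ e ∈ E, e.1 ∈ I.powerset := fun e he =>
    Finset.mem_powerset.2 (mem_gridSupport.1 he).1
  have hEY : ∀ e ∈ E, e.2 ∈ J.powerset := fun e he =>
    Finset.mem_powerset.2 (mem_gridSupport.1 he).2.1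
  have hX : ∀ x ∈ I.powerset, Odd (fiberCard E Prod.fst x) := fun x hx => by
    rw [fiberCard_fst_gridSupport]
    exact odd_fiberCard_snd_gridSupport h.symm hIJ.symm hφ' (Finset.mem_powerset.1 hx)
  have hY : ∀ y ∈ J.powerset, Odd (fiberCard E Prod.snd y) := fun y hy =>
    odd_fiberCard_snd_gridSupport h hIJ hφ (Finset.mem_powerset.1 hy)
  have hcard : #I.powerset = #J.powerset := by simp [h.card_eq]
  have hJ : #J.powerset = 2 ^ #I := by rw [Finset.card_powerset, h.card_eq]
  by_cases hI : #I = 1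
  · -- two rows, each of odd weight
    have hrows := three_mul_card_le_card_add hEY hY
    have hle := Finset.card_filter_le J.powerset (fun y => fiberCard E Prod.snd y = 1)
    have h2 : 2 ^ #I = 2 := by rw [hI, pow_one]
    omega
  · replace hI : 2 ≤ #I := by have := h.card_pos; omega
    have := two_mul_card_le_card_add_two hEX hEY hcard hX hY
      (Finset.mem_powerset.2 (Finset.filter_subset (fun i => insert i J ∈ φ) I))
      (Finset.mem_powerset.2 (Finset.filter_subset (fun j => insert j I ∈ φ) J))
      (fun e he h₁ => fst_eq_of_fiberCard_snd_eq_one h hIJ hφ hI he h₁)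
      (fun e he h₁ => fst_eq_of_fiberCard_snd_eq_one h.symm hIJ.symm hφ' (h.card_eq ▸ hI)
        (e := e.swap) (by rw [← map_prodComm_gridSupport]; exact Finset.mem_map_equiv.2 he)
        (by rwa [← fiberCard_fst_gridSupport]))
    rw [hJ] at this
    omega

end Disjoint

theorem two_pow_le_weightOn_add (u : Finset ℕ) {I J : Finset ℕ} {φ : Finset (Finset ℕ)}
    (h : MergedPair I J φ) (hφ : ∀ t ∈ φ, t ⊆ u) :
    2 ^ (#I + 1) ≤ weightOn u (subsetParity φ) + 2 ^ (#(I ∩ J) + 1) := by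
  induction u using Finset.strongInduction generalizing I J φ with
  | H u ih =>
  by_cases hIJ : (I ∩ J).Nonempty
  · obtain ⟨k, hk⟩ := hIJ
    obtain ⟨hkI, hkJ⟩ := Finset.mem_inter.1 hk
    have hku : k ∈ u := hφ I h.left_mem hkI
    have h₀ := ih _ (Finset.erase_ssubset hku) (h.cofactorZero hkI hkJ)
      fun t ht => subset_erase_of_mem_cofactorZero hφ ht
    have h₁ := ih _ (Finset.erase_ssubset hku) (h.cofactorOne hkI hkJ)
      fun t ht => subset_erase_of_mem_cofactorOne hφ ht
    have hinter : I.erase k ∩ J.erase k = (I ∩ J).erase k := by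
      ext
      simp only [Finset.mem_inter, Finset.mem_erase]
      tauto
    rw [hinter, Finset.card_erase_add_one hkI, Finset.card_erase_add_one hk] at h₀ h₁
    rw [weightOn_eq_add_cofactor hku, pow_succ, pow_succ]
    omega
  rw [Finset.not_nonempty_iff_eq_empty] at hIJ
  by_cases hu : ∃ k ∈ u, k ∉ I ∪ J
  · obtain ⟨k, hku, hk⟩ := hu
    obtain ⟨hkI, hkJ⟩ := Finset.notMem_union.1 hk
    have hψ := ih _ (Finset.erase_ssubset hku) (h.filter_notMem hkI hkJ)
      fun t ht => subset_erase_of_mem_filter_notMem hφ ht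
    have hle := weightOn_filter_notMem_le (φ := φ) hku
    omega
  · have hu : u = I ∪ J := Finset.Subset.antisymm (fun k hk => by_contra fun hk' => hu ⟨k, hk, hk'⟩)
      (Finset.union_subset (hφ I h.left_mem) (hφ J h.right_mem))
    subst hu
    rw [hIJ, Finset.card_empty]
    exact two_pow_le_weightOn_union_add_two h (Finset.disjoint_iff_inter_eq_empty.2 hIJ) hφ

lemma mem_equivBitIndices {j k : ℕ} : k ∈ equivBitIndices j ↔ j.testBit k := by
  simp

lemma equivBitIndices_subset_range {n j : ℕ} (hj : j < 2 ^ n) : equivBitIndices j ⊆ range n := by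
  intro k hk
  by_contra hkn
  have hjk : j < 2 ^ k := hj.trans_le (Nat.pow_le_pow_right two_pos (by simpa using hkn))
  simp [Nat.testBit_lt_two_pow hjk] at hk

lemma equivBitIndices_and (a b : ℕ) :
    equivBitIndices (a &&& b) = equivBitIndices a ∩ equivBitIndices b := by
  ext k
  simp [Nat.testBit_and]

lemma card_equivBitIndices (j : ℕ) : #(equivBitIndices j) = popcount j := by
  rw [equivBitIndices_apply, List.toFinset_card_of_nodup Nat.bitIndices_nodup, popcount]
  induction j using Nat.binaryRec with
  | zero => simp
  | bit b n ih =>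
    rcases eq_or_ne n 0 with rfl | hn
    · cases b <;> simp
    · rw [Nat.bits_append_bit n b (fun h => absurd h hn)]
      cases b <;> simp [ih]

lemma equivBitIndices_two_pow_mul_add_subset_iff {n a a' b b' : ℕ} (hb : b < 2 ^ n)
    (hb' : b' < 2 ^ n) :
    equivBitIndices (2 ^ n * a + b) ⊆ equivBitIndices (2 ^ n * a' + b') ↔
      equivBitIndices a ⊆ equivBitIndices a' ∧ equivBitIndices b ⊆ equivBitIndices b' := by
  simp only [Finset.subset_iff, mem_equivBitIndices, Nat.testBit_two_pow_mul_add _ hb,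
    Nat.testBit_two_pow_mul_add _ hb']
  constructor
  · intro h
    refine ⟨fun k hk => ?_, fun k hk => ?_⟩
    · simpa using @h (k + n) (by simpa using hk)
    · by_cases hkn : k < n
      · simpa [hkn] using @h k (by simpa [hkn] using hk)
      · have hbk : b < 2 ^ k := hb.trans_le (Nat.pow_le_pow_right two_pos (not_lt.1 hkn))
        simp [Nat.testBit_lt_two_pow hbk] at hk
  · rintro ⟨ha, hb⟩ k
    split_ifs
    exacts [@hb k, @ha _]

lemma polarKernel_apply (a b : Fin 2) :
    polarKernel a b = if equivBitIndices b ⊆ equivBitIndices a then 1 else 0 := by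
  fin_cases a <;> fin_cases b <;> simp [polarKernel]

lemma polarG_apply (n : ℕ) (t c : Fin (2 ^ n)) :
    polarG n t c = if equivBitIndices c ⊆ equivBitIndices t then 1 else 0 := by
  induction n with
  | zero =>
    fin_cases t; fin_cases c
    simp [polarG]
  | succ n ih =>
    simp only [polarG, Matrix.reindex_apply, Matrix.submatrix_apply, finProdFinEquiv_symm_apply,
      Matrix.kroneckerMap_apply, polarKernel_apply, ih]
    have key := equivBitIndices_two_pow_mul_add_subset_iff (n := n) (a := (c : ℕ) / 2 ^ n)
      (a' := (t : ℕ) / 2 ^ n) (Nat.mod_lt (c : ℕ) (by positivity))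
      (Nat.mod_lt (t : ℕ) (by positivity))
    rw [Nat.div_add_mod, Nat.div_add_mod] at key
    simp only [key, ite_and]
    simp only [Fin.divNat, Fin.modNat, Fin.val_cast, finCongr_symm, finCongr_apply]
    split_ifs <;> simp

lemma sum_row_apply (n : ℕ) (Φ : Finset (Fin (2 ^ n))) (c : Fin (2 ^ n)) :
    (∑ t ∈ Φ, row n t) c =
      subsetParity (Φ.image fun t : Fin (2 ^ n) => equivBitIndices t) (equivBitIndices c) := by
  rw [Finset.sum_apply, subsetParity,
    Finset.sum_image fun a _ b _ h => Fin.val_injective (equivBitIndices.injective h)]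
  exact Finset.sum_congr rfl fun t _ => polarG_apply n t c

lemma hammingWeight_sum_row (n : ℕ) (Φ : Finset (Fin (2 ^ n))) :
    hammingWeight (∑ t ∈ Φ, row n t) =
      weightOn (range n) (subsetParity (Φ.image fun t : Fin (2 ^ n) => equivBitIndices t)) := by
  refine Finset.card_bij' (fun c _ => equivBitIndices c)
    (fun s hs => ⟨equivBitIndices.symm s, ?_⟩) ?_ ?_ ?_ ?_
  · have hs := Finset.mem_powerset.1 (Finset.mem_filter.1 hs).1
    exact Nat.geomSum_lt le_rfl fun k hk => Finset.mem_range.1 (hs hk)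
  · intro c hc
    rw [Finset.mem_filter, ← sum_row_apply]
    exact ⟨Finset.mem_powerset.2 (equivBitIndices_subset_range c.isLt), (Finset.mem_filter.1 hc).2⟩
  · intro s hs
    rw [Finset.mem_filter, sum_row_apply, Equiv.apply_symm_apply]
    exact ⟨Finset.mem_univ _, (Finset.mem_filter.1 hs).2⟩
  · intro c _
    exact Fin.ext (equivBitIndices.symm_apply_apply c)
  · intro s _
    exact equivBitIndices.apply_symm_apply s

lemma mergedPair_image_bitIndices {n ℓ : ℕ} {i j : Fin (2 ^ n)} (hij : i ≠ j)
    (hi : popcount (i : ℕ) = ℓ) (hj : popcount (j : ℕ) = ℓ) {T : Finset (Fin (2 ^ n))}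
    (hT : ∀ t ∈ T, ℓ + 1 ≤ popcount (t : ℕ)) :
    MergedPair (equivBitIndices i) (equivBitIndices j)
      ((insert i (insert j T)).image fun t : Fin (2 ^ n) => equivBitIndices t) where
  ne h := hij (Fin.val_injective (equivBitIndices.injective h))
  card_eq := by rw [card_equivBitIndices, card_equivBitIndices, hi, hj]
  left_mem := Finset.mem_image_of_mem _ (Finset.mem_insert_self _ _)
  right_mem := Finset.mem_image_of_mem _ (Finset.mem_insert_of_mem (Finset.mem_insert_self _ _))
  card_lt t ht hti htj := by
    obtain ⟨s, hs, rfl⟩ := Finset.mem_image.1 ht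
    rcases Finset.mem_insert.1 hs with rfl | hs
    · exact absurd rfl hti
    rcases Finset.mem_insert.1 hs with rfl | hs
    · exact absurd rfl htj
    rw [card_equivBitIndices, card_equivBitIndices, hi]
    exact hT s hs

end PolarWeight

open PolarWeight in
theorem merged_pair_weight_lower_bound_general (n ℓ : ℕ)
    (i j : Fin (2 ^ n)) (hij : i ≠ j)
    (hi : popcount (i : ℕ) = ℓ) (hj : popcount (j : ℕ) = ℓ)
    (T : Finset (Fin (2 ^ n))) (hT : ∀ t ∈ T, ℓ + 1 ≤ popcount (t : ℕ)) :
    hammingWeight (row n i + row n j) ≤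
        hammingWeight (row n i + row n j + ∑ t ∈ T, row n t) ∧
      hammingWeight (row n i + row n j) =
        2 ^ (ℓ + 1) - 2 ^ (popcount ((i : ℕ) &&& (j : ℕ)) + 1) := by
  have hjT : j ∉ T := fun h => by have := hT j h; omega
  have hiT : i ∉ insert j T := by
    rw [Finset.mem_insert, not_or]
    exact ⟨hij, fun h => by have := hT i h; omega⟩
  have hmerged := mergedPair_image_bitIndices hij hi hj hT
  have hsub : ∀ t ∈ (insert i (insert j T)).image fun t : Fin (2 ^ n) => equivBitIndices t,
      t ⊆ range n := fun t ht => by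
    obtain ⟨s, -, rfl⟩ := Finset.mem_image.1 ht
    exact equivBitIndices_subset_range s.isLt
  have hlower := two_pow_le_weightOn_add (range n) hmerged hsub
  have hpair := weightOn_pair (hsub _ hmerged.left_mem) (hsub _ hmerged.right_mem) hmerged.ne
  rw [← equivBitIndices_and, card_equivBitIndices, card_equivBitIndices, card_equivBitIndices,
    hi, hj] at hpair
  rw [← equivBitIndices_and, card_equivBitIndices, card_equivBitIndices, hi] at hlower
  rw [add_assoc, ← Finset.sum_insert hjT, ← Finset.sum_insert hiT, ← Finset.sum_pair hij,
    hammingWeight_sum_row, hammingWeight_sum_row, Finset.image_insert, Finset.image_singleton]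
  rw [pow_succ, pow_succ] at *
  omega

/-- for any pair `(i, j)` of common popcount `ℓ ≥ 2`, adding any rows of
popcount at least `ℓ+1` cannot decrease the Hamming weight below
`i₁(g_i + g_j) = 2^(ℓ+1) - 2^(popcount(i AND j)+1)`. -/
theorem merged_pair_weight_lower_bound (n ℓ : ℕ) (hℓ : 2 ≤ ℓ)
    (i j : Fin (2 ^ n)) (hij : i ≠ j)
    (hi : popcount (i : ℕ) = ℓ) (hj : popcount (j : ℕ) = ℓ)
    (T : Finset (Fin (2 ^ n))) (hT : ∀ t ∈ T, ℓ + 1 ≤ popcount (t : ℕ)) :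
    hammingWeight (row n i + row n j) ≤
        hammingWeight (row n i + row n j + ∑ t ∈ T, row n t) ∧
      hammingWeight (row n i + row n j) =
        2 ^ (ℓ + 1) - 2 ^ (popcount ((i : ℕ) &&& (j : ℕ)) + 1) :=
  merged_pair_weight_lower_bound_general n ℓ i j hij hi hj T hT
end

section
/- Let n ∈ ℕ, N = 2^n, and let G be the n-fold Kronecker power over 𝔽₂ of the kernel [[1,0],[1,1]]. Then for every row index j ∈ {0,…,N−1}, the Hamming weight of the row g_j equals 2^{popcount(j)}, where popcount(j) is the number of ones in the binary representation of j. -/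
open Finset

lemma popcount_zero : popcount 0 = 0 := by simp [popcount]

lemma popcount_two_mul (m : ℕ) (hm : m ≠ 0) : popcount (2 * m) = popcount m := by
  simp [popcount, Nat.bit0_bits m hm]

lemma popcount_two_mul_add_one (m : ℕ) : popcount (2 * m + 1) = popcount m + 1 := by
  simp [popcount, Nat.bit1_bits m]

lemma popcount_pow_add (n b : ℕ) (hb : b < 2 ^ n) :
    popcount (2 ^ n + b) = popcount b + 1 := by
  induction n generalizing b with
  | zero =>
    interval_cases b
    simp [popcount, Nat.one_bits]
  | succ n ih =>
    have hb2 : b / 2 < 2 ^ n := by omega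
    rcases Nat.even_or_odd b with he | ho
    · obtain ⟨k, hk⟩ := he
      have hb : b = 2 * k := by omega
      subst hb
      have hkey : 2 ^ (n + 1) + 2 * k = 2 * (2 ^ n + k) := by ring
      rw [hkey, popcount_two_mul _ (by positivity), ih k (by omega)]
      rcases Nat.eq_zero_or_pos k with rfl | hk0
      · simp [popcount_zero]
      · rw [popcount_two_mul _ (by omega)]
    · obtain ⟨k, hk⟩ := ho
      subst hk
      have hkey : 2 ^ (n + 1) + (2 * k + 1) = 2 * (2 ^ n + k) + 1 := by ring
      rw [hkey, popcount_two_mul_add_one, ih k (by omega), popcount_two_mul_add_one]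

lemma kernel_row_weight (a : Fin 2) :
    (Finset.univ.filter fun c => polarKernel a c ≠ 0).card = 2 ^ (a : ℕ) := by
  fin_cases a <;> simp [polarKernel, Finset.filter_ne', Fin.isValue] <;> decide

set_option maxHeartbeats 1000000 in
/-- the Hamming weight of row `g_j` of the polar matrix is `2^popcount(j)`. -/
theorem hamming_weight_row (n : ℕ) (j : Fin (2 ^ n)) :
    hammingWeight (row n j) = 2 ^ popcount (j : ℕ) := by
  induction n with
  | zero =>
    have hj : j = ⟨0, by norm_num⟩ := by ext; omega
    subst hj
    simp [hammingWeight, row, polarG, popcount_zero]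
    decide
  | succ n ih =>
    set e : Fin 2 × Fin (2 ^ n) ≃ Fin (2 ^ (n + 1)) :=
      finProdFinEquiv.trans (finCongr (by ring)) with he
    obtain ⟨⟨a, b⟩, rfl⟩ := e.surjective j
    have hrow : ∀ x : Fin 2 × Fin (2 ^ n),
        row (n + 1) (e (a, b)) (e x) = polarKernel a x.1 * polarG n b x.2 := by
      intro x
      simp [row, polarG, he, Matrix.reindex_apply, Matrix.submatrix_apply]
    have hcard : hammingWeight (row (n + 1) (e (a, b))) =
        ((Finset.univ : Finset (Fin 2 × Fin (2 ^ n))).filter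
          fun x => polarKernel a x.1 * polarG n b x.2 ≠ 0).card := by
      rw [hammingWeight]
      refine Finset.card_equiv (t := (Finset.univ : Finset (Fin 2 × Fin (2 ^ n))).filter
          fun x => polarKernel a x.1 * polarG n b x.2 ≠ 0) e.symm fun c => ?_
      · simp only [Finset.mem_filter, Finset.mem_univ, true_and]
        constructor
        · intro h
          rw [← hrow (e.symm c), Equiv.apply_symm_apply]
          exact h
        · intro h
          rw [← hrow (e.symm c), Equiv.apply_symm_apply] at h
          exact h
    rw [hcard]
    have hsplit : ((Finset.univ : Finset (Fin 2 × Fin (2 ^ n))).filter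
          fun x => polarKernel a x.1 * polarG n b x.2 ≠ 0) =
        (Finset.univ.filter fun c => polarKernel a c ≠ 0) ×ˢ
          (Finset.univ.filter fun c => polarG n b c ≠ 0) := by
      rw [Finset.filter_congr (q := fun x : Fin 2 × Fin (2 ^ n) =>
          polarKernel a x.1 ≠ 0 ∧ polarG n b x.2 ≠ 0)
          (fun x _ => by simp [mul_ne_zero_iff]),
        ← Finset.univ_product_univ]
      exact Finset.filter_product (fun c => polarKernel a c ≠ 0) (fun c => polarG n b c ≠ 0)
    rw [hsplit, Finset.card_product, kernel_row_weight]
    have hih : (Finset.univ.filter fun c => polarG n b c ≠ 0).card = 2 ^ popcount (b : ℕ) :=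
      ih b
    rw [hih, ← pow_add]
    congr 1
    have hval : ((e (a, b) : Fin (2 ^ (n + 1))) : ℕ) = (b : ℕ) + 2 ^ n * (a : ℕ) := by
      simp [he]
    rw [hval]
    fin_cases a
    · simp
    · simp only [Fin.val_one, mul_one, Nat.pow_succ]
      rw [Nat.add_comm (b : ℕ) (2 ^ n), popcount_pow_add n b b.isLt]
      ring
end

section
/- Let n ∈ ℕ, N = 2^n, let G be the n-fold Kronecker power over 𝔽₂ of the kernel [[1,0],[1,1]], and fix a bit position ℓ < n. For every row index j ∈ {0,…,N−1}, let W = |{c ∈ {0,…,N−1} : the ℓ-th binary digit of c is 0 and G[j,c] ≠ 0}| be the Hamming weight of row g_j restricted to the columns whose ℓ-th digit is 0. Then the total Hamming weight of g_j equals W if the ℓ-th binary digit of j is 0, and equals 2·W if the ℓ-th binary digit of j is 1. -/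
open Finset

/-!
The support of row `g_j` consists of the columns `c` whose binary digits are dominated by those
of `j`, since an entry of the Kronecker power is the product of the kernel entries
`G₂[j_i, c_i]`, and `G₂[a, b] ≠ 0 ↔ b ≤ a`. If digit `ℓ` of `j` is `0`, every column of the
support has digit `ℓ` equal to `0`. If it is `1`, flipping digit `ℓ` is an involution of the
support exchanging its columns with digit `ℓ` equal to `0` and those with digit `1`.
-/

lemma polarKernel_ne_zero_iff (a b : Fin 2) : polarKernel a b ≠ 0 ↔ (b = 1 → a = 1) := by
  fin_cases a <;> fin_cases b <;> simp [polarKernel]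

lemma div_two_pow_lt_two {n x : ℕ} (hx : x < 2 ^ (n + 1)) : x / 2 ^ n < 2 :=
  Nat.div_lt_of_lt_mul (by rwa [pow_succ] at hx)

lemma testBit_iff_div_two_pow_eq_one {n x : ℕ} (hx : x < 2 ^ (n + 1)) :
    x.testBit n ↔ x / 2 ^ n = 1 := by
  have hq := div_two_pow_lt_two hx
  rw [Nat.testBit_eq_decide_div_mod_eq, decide_eq_true_eq]
  generalize x / 2 ^ n = q at hq ⊢
  omega

lemma polarG_succ_apply (n : ℕ) (j c : Fin (2 ^ (n + 1))) :
    polarG (n + 1) j c =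
      polarKernel ⟨j / 2 ^ n, div_two_pow_lt_two j.isLt⟩ ⟨c / 2 ^ n, div_two_pow_lt_two c.isLt⟩ *
        polarG n ⟨j % 2 ^ n, Nat.mod_lt _ (by positivity)⟩
          ⟨c % 2 ^ n, Nat.mod_lt _ (by positivity)⟩ := by
  simp [polarG, finProdFinEquiv, Fin.divNat, Fin.modNat]

lemma testBit_imp_iff_top_and_mod {n c j : ℕ} (hc : c < 2 ^ (n + 1)) :
    (∀ i, c.testBit i → j.testBit i) ↔
      (c.testBit n → j.testBit n) ∧ ∀ i, (c % 2 ^ n).testBit i → (j % 2 ^ n).testBit i := by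
  simp only [Nat.testBit_mod_two_pow, Bool.and_eq_true, decide_eq_true_eq]
  refine ⟨fun h => ⟨h n, fun i hi => ⟨hi.1, h i hi.2⟩⟩, fun ⟨htop, hlow⟩ i hi => ?_⟩
  rcases lt_trichotomy i n with hin | rfl | hni
  · exact (hlow i ⟨hin, hi⟩).2
  · exact htop hi
  · have hci : c.testBit i = false :=
      Nat.testBit_lt_two_pow (hc.trans_le (Nat.pow_le_pow_right two_pos hni))
    simp [hci] at hi

theorem polarG_apply_ne_zero_iff :
    ∀ (n : ℕ) (j c : Fin (2 ^ n)), polarG n j c ≠ 0 ↔ ∀ i, (c : ℕ).testBit i → (j : ℕ).testBit i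
  | 0, j, c => by
    obtain rfl : j = c := Fin.ext (by omega)
    simp [polarG]
  | n + 1, j, c => by
    rw [polarG_succ_apply, mul_ne_zero_iff, polarKernel_ne_zero_iff, polarG_apply_ne_zero_iff n,
      testBit_imp_iff_top_and_mod c.isLt, testBit_iff_div_two_pow_eq_one c.isLt,
      testBit_iff_div_two_pow_eq_one j.isLt]
    simp only [Fin.ext_iff, Fin.val_one]

lemma card_eq_two_mul_card_filter_of_involutive {α : Type*} (s : Finset α) (σ : α → α)
    (hσ : Function.Involutive σ) (hs : ∀ x ∈ s, σ x ∈ s) (p : α → Prop) [DecidablePred p]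
    (hp : ∀ x, p (σ x) ↔ ¬ p x) : #s = 2 * #(s.filter p) := by
  have hswap : #(s.filter fun x => ¬ p x) = #(s.filter p) :=
    card_nbij' σ σ
      (fun x hx => by
        simp only [coe_filter, Set.mem_ofPred_eq] at hx ⊢
        exact ⟨hs x hx.1, (hp x).2 hx.2⟩)
      (fun x hx => by
        simp only [coe_filter, Set.mem_ofPred_eq] at hx ⊢
        exact ⟨hs x hx.1, fun h => (hp x).1 h hx.2⟩)
      (fun x _ => hσ x) (fun x _ => hσ x)
  rw [← card_filter_add_card_filter_not p, hswap, two_mul]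

def Fin.flipBit {n ℓ : ℕ} (hℓ : ℓ < n) (c : Fin (2 ^ n)) : Fin (2 ^ n) :=
  ⟨c ^^^ 2 ^ ℓ, Nat.xor_lt_two_pow c.isLt (Nat.pow_lt_pow_right one_lt_two hℓ)⟩

lemma Fin.testBit_flipBit {n ℓ : ℕ} (hℓ : ℓ < n) (c : Fin (2 ^ n)) (i : ℕ) :
    (Fin.flipBit hℓ c : ℕ).testBit i = ((c : ℕ).testBit i ^^ decide (ℓ = i)) := by
  simp [Fin.flipBit, Nat.testBit_two_pow]

lemma Fin.flipBit_involutive {n ℓ : ℕ} (hℓ : ℓ < n) : Function.Involutive (Fin.flipBit hℓ) :=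
  fun c => Fin.ext (by simp [Fin.flipBit])

lemma polarG_apply_flipBit_ne_zero {n ℓ : ℕ} (hℓ : ℓ < n) {j c : Fin (2 ^ n)}
    (hj : (j : ℕ).testBit ℓ) (hc : polarG n j c ≠ 0) : polarG n j (Fin.flipBit hℓ c) ≠ 0 := by
  rw [polarG_apply_ne_zero_iff] at hc ⊢
  intro i hi
  by_cases hiℓ : ℓ = i
  · exact hiℓ ▸ hj
  · exact hc i (by simpa [Fin.testBit_flipBit, hiℓ] using hi)

theorem hamming_weight_row_split_general (n ℓ : ℕ) (j : Fin (2 ^ n)) :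
    hammingWeight (row n j) =
      if (j : ℕ).testBit ℓ then
        2 * ((Finset.univ.filter fun c : Fin (2 ^ n) =>
          (c : ℕ).testBit ℓ = false ∧ row n j c ≠ 0).card)
      else
        (Finset.univ.filter fun c : Fin (2 ^ n) =>
          (c : ℕ).testBit ℓ = false ∧ row n j c ≠ 0).card := by
  rw [hammingWeight]
  simp_rw [and_comm (a := _ = false), ← filter_filter]
  split_ifs with hj
  · have hℓ : ℓ < n :=
      (Nat.pow_lt_pow_iff_right one_lt_two).1 ((Nat.ge_two_pow_of_testBit hj).trans_lt j.isLt)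
    refine card_eq_two_mul_card_filter_of_involutive _ _ (Fin.flipBit_involutive hℓ)
      (fun c hc => ?_) _ (fun c => by simp [Fin.testBit_flipBit])
    simp only [mem_filter, mem_univ, true_and] at hc ⊢
    exact polarG_apply_flipBit_ne_zero hℓ hj hc
  · refine congrArg card (filter_true_of_mem fun c hc => ?_).symm
    rw [mem_filter, row, polarG_apply_ne_zero_iff] at hc
    exact Bool.eq_false_iff.2 fun hc' => hj (hc.2 ℓ hc')

/-- the total Hamming weight of row `g_j` equals `W` if the `ℓ`-th digit of
`j` is `0` and `2·W` if it is `1`, where `W` is the weight of the restriction of `g_j`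
to the columns whose `ℓ`-th digit is `0`. -/
theorem hamming_weight_row_split (n ℓ : ℕ) (hℓ : ℓ < n) (j : Fin (2 ^ n)) :
    hammingWeight (row n j) =
      if (j : ℕ).testBit ℓ then
        2 * ((Finset.univ.filter fun c : Fin (2 ^ n) =>
          (c : ℕ).testBit ℓ = false ∧ row n j c ≠ 0).card)
      else
        (Finset.univ.filter fun c : Fin (2 ^ n) =>
          (c : ℕ).testBit ℓ = false ∧ row n j c ≠ 0).card :=
  hamming_weight_row_split_general n ℓ j
end
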